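/- Let (B,L) be a Hadamard pair. If μ is a spectral measure on ℝ^d with spectrum Λ contained in Π(B), then Tμ is a spectral measure with spectrum SΛ = ∪_{l∈L}(R^T Λ + l). -/

import Mathlib

open MeasureTheory Complex Finset Matrix
open scoped ENNReal NNReal

noncomputable def tauMap {d : ℕ} (Rr : Matrix (Fin d) (Fin d) ℝ) (b : Fin d → ℤ)
    (x : Fin d → ℝ) : Fin d → ℝ :=
  Rr⁻¹.mulVec (x + fun i => (b i : ℝ))

noncomputable def measOp {d : ℕ} (Rr : Matrix (Fin d) (Fin d) ℝ) (B : Finset (Fin d → ℤ))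
    (μ : Measure (Fin d → ℝ)) : Measure (Fin d → ℝ) :=
  (B.card : ℝ≥0∞)⁻¹ • ∑ b ∈ B, Measure.map (tauMap Rr b) μ

noncomputable def fourierTf {d : ℕ} (μ : Measure (Fin d → ℝ)) (x : Fin d → ℝ) : ℂ :=
  ∫ t, Complex.exp (2 * Real.pi * Complex.I * ((∑ i, x i * t i : ℝ) : ℂ)) ∂μ

noncomputable def expFn {d : ℕ} (l : Fin d → ℝ) (x : Fin d → ℝ) : ℂ :=
  Complex.exp (2 * Real.pi * Complex.I * ((∑ i, l i * x i : ℝ) : ℂ))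

/-- `Λ` is a spectrum for `μ`: the exponentials `e_λ`, `λ ∈ Λ`, form an orthonormal
basis of `L²(μ)`, expressed as orthonormality together with completeness. -/
def IsSpectral {d : ℕ} (μ : Measure (Fin d → ℝ)) (Λ : Set (Fin d → ℝ)) : Prop :=
  (∀ l1 ∈ Λ, ∀ l2 ∈ Λ, l1 ≠ l2 →
      ∫ x, expFn l1 x * (starRingEnd ℂ) (expFn l2 x) ∂μ = 0) ∧
  (∀ f : (Fin d → ℝ) → ℂ, MemLp f 2 μ →
      (∀ l ∈ Λ, ∫ x, f x * (starRingEnd ℂ) (expFn l x) ∂μ = 0) → f =ᵐ[μ] 0)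

noncomputable def hadamardMatrix {d : ℕ} (R : Matrix (Fin d) (Fin d) ℤ)
    (B L : Finset (Fin d → ℤ)) : Matrix {b // b ∈ B} {l // l ∈ L} ℂ :=
  fun b l => (Real.sqrt B.card : ℂ)⁻¹ * Complex.exp (2 * Real.pi * Complex.I *
    ((∑ i, ((R.map ((↑) : ℤ → ℝ))⁻¹.mulVec (fun j => ((b : Fin d → ℤ) j : ℝ))) i *
      ((l : Fin d → ℤ) i : ℝ) : ℝ) : ℂ))

def IsHadamardPair {d : ℕ} (R : Matrix (Fin d) (Fin d) ℤ)
    (B L : Finset (Fin d → ℤ)) : Prop :=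
  (hadamardMatrix R B L)ᴴ * hadamardMatrix R B L = 1 ∧
  hadamardMatrix R B L * (hadamardMatrix R B L)ᴴ = 1

def PiSet {d : ℕ} (B : Finset (Fin d → ℤ)) : Set (Fin d → ℝ) :=
  {γ | ∀ b ∈ B, ∃ m : ℤ, (∑ i, γ i * (b i : ℝ)) = (m : ℝ)}

/-- `SΛ = ∪_{l∈L} (R^T Λ + l)`. -/
def specOp {d : ℕ} (R : Matrix (Fin d) (Fin d) ℤ) (L : Finset (Fin d → ℤ))
    (Λ : Set (Fin d → ℝ)) : Set (Fin d → ℝ) :=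
  ⋃ l ∈ L, (fun γ => ((R.map ((↑) : ℤ → ℝ))ᵀ).mulVec γ + fun i => (l i : ℝ)) '' Λ


/-!
Write `e_ξ(x) = exp(2πi ξ·x)`, `N = #B` and `Tμ = N⁻¹ Σ_b (τ_b)_* μ`. For `ξ = Rᵀγ + l` with
`γ ∈ Π(B)`, the integrality of `γ·b` gives `e_ξ(τ_b x) = exp(2πi R⁻¹b·l) e_{γ + R⁻ᵀl}(x)`. Hence
the `Tμ`-inner product of `f` with `e_ξ` is `N⁻¹` times the `μ`-inner product of `e_γ` with
`g_l = conj e_{R⁻ᵀl} · Σ_b conj(exp(2πi R⁻¹b·l)) f ∘ τ_b` (`pullbackSum`).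

For `f = e_{ξ'}`, `ξ' = Rᵀγ' + l'`, the function `g_l` is a multiple of `e_{γ'}` when `l = l'`,
and it vanishes when `l ≠ l'` because the columns of the Hadamard matrix are orthogonal; this gives
orthogonality of `SΛ`. If `f ∈ L²(Tμ)` is orthogonal to all of `SΛ`, every `g_l` is orthogonal to
all of `Λ`, so `g_l = 0` `μ`-a.e.; orthogonality of the rows of the Hadamard matrix recovers each
`f ∘ τ_b` from the `g_l`, so `f = 0` `Tμ`-a.e.
-/

open FourierTransform

section ExpFn

variable {d : ℕ}

abbrev castVec (b : Fin d → ℤ) : Fin d → ℝ := fun i => b i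

lemma expFn_eq_fourierChar (u x : Fin d → ℝ) : expFn u x = 𝐞 (u ⬝ᵥ x) := by
  rw [expFn, Real.fourierChar_apply]
  congr 1
  push_cast [dotProduct]
  ring

lemma norm_expFn (u x : Fin d → ℝ) : ‖expFn u x‖ = 1 := by
  rw [expFn_eq_fourierChar, Circle.norm_coe]

lemma continuous_expFn (u : Fin d → ℝ) : Continuous (expFn u) := by
  unfold expFn
  fun_prop

lemma expFn_comm (u x : Fin d → ℝ) : expFn u x = expFn x u := by
  rw [expFn_eq_fourierChar, expFn_eq_fourierChar, dotProduct_comm]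

lemma expFn_add_left (u v x : Fin d → ℝ) : expFn (u + v) x = expFn u x * expFn v x := by
  simp only [expFn_eq_fourierChar, add_dotProduct, AddChar.map_add_eq_mul, Circle.coe_mul]

lemma expFn_add_right (u x y : Fin d → ℝ) : expFn u (x + y) = expFn u x * expFn u y := by
  rw [expFn_comm, expFn_add_left, expFn_comm x, expFn_comm y]

lemma expFn_mulVec (M : Matrix (Fin d) (Fin d) ℝ) (u x : Fin d → ℝ) :
    expFn u (M *ᵥ x) = expFn (Mᵀ *ᵥ u) x := by
  rw [expFn_eq_fourierChar, expFn_eq_fourierChar, dotProduct_mulVec, mulVec_transpose]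

lemma expFn_eq_one_of_dotProduct_eq_intCast {u x : Fin d → ℝ} {k : ℤ} (h : u ⬝ᵥ x = k) :
    expFn u x = 1 := by
  rw [expFn_eq_fourierChar, h, Real.fourierChar_apply', mul_comm, Circle.exp_int_mul_two_pi,
    Circle.coe_one]

lemma conj_expFn_mul_self (u x : Fin d → ℝ) : starRingEnd ℂ (expFn u x) * expFn u x = 1 := by
  rw [Complex.conj_mul', norm_expFn]
  norm_num

end ExpFn

section Hadamard

variable {d : ℕ}

noncomputable abbrev hadamardPhase (Rr : Matrix (Fin d) (Fin d) ℝ) (b l : Fin d → ℤ) : ℂ :=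
  expFn (Rr⁻¹ *ᵥ castVec b) (castVec l)

lemma inv_sqrt_mul_inv_sqrt (n : ℕ) : ((√n : ℝ) : ℂ)⁻¹ * ((√n : ℝ) : ℂ)⁻¹ = (n : ℂ)⁻¹ := by
  rw [← mul_inv, ← Complex.ofReal_mul, Real.mul_self_sqrt n.cast_nonneg, Complex.ofReal_natCast]

variable (R : Matrix (Fin d) (Fin d) ℤ) (B L : Finset (Fin d → ℤ))

lemma hadamardMatrix_apply (b : {b // b ∈ B}) (l : {l // l ∈ L}) :
    hadamardMatrix R B L b l = ((√B.card : ℝ) : ℂ)⁻¹ * hadamardPhase (R.map (↑)) b l :=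
  rfl

lemma conjTranspose_hadamardMatrix_mul_apply (l₁ l₂ : {l // l ∈ L}) :
    ((hadamardMatrix R B L)ᴴ * hadamardMatrix R B L) l₁ l₂ =
      (B.card : ℂ)⁻¹ * ∑ b ∈ B, starRingEnd ℂ (hadamardPhase (R.map (↑)) b l₁) *
        hadamardPhase (R.map (↑)) b l₂ := by
  simp only [Matrix.mul_apply, conjTranspose_apply, hadamardMatrix_apply, Complex.star_def, map_mul,
    map_inv₀, Complex.conj_ofReal, Finset.mul_sum]
  rw [← Finset.sum_coe_sort B]
  refine Finset.sum_congr rfl fun b _ => ?_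
  rw [← inv_sqrt_mul_inv_sqrt]
  ring

lemma hadamardMatrix_mul_conjTranspose_apply (b₁ b₂ : {b // b ∈ B}) :
    (hadamardMatrix R B L * (hadamardMatrix R B L)ᴴ) b₁ b₂ =
      (B.card : ℂ)⁻¹ * ∑ l ∈ L, hadamardPhase (R.map (↑)) b₁ l *
        starRingEnd ℂ (hadamardPhase (R.map (↑)) b₂ l) := by
  simp only [Matrix.mul_apply, conjTranspose_apply, hadamardMatrix_apply, Complex.star_def, map_mul,
    map_inv₀, Complex.conj_ofReal, Finset.mul_sum]
  rw [← Finset.sum_coe_sort L]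
  refine Finset.sum_congr rfl fun l _ => ?_
  rw [← inv_sqrt_mul_inv_sqrt]
  ring

variable {R B L}

lemma IsHadamardPair.sum_conj_mul_eq_zero (hH : IsHadamardPair R B L) {l₁ l₂ : Fin d → ℤ}
    (h₁ : l₁ ∈ L) (h₂ : l₂ ∈ L) (hne : l₁ ≠ l₂) :
    ∑ b ∈ B, starRingEnd ℂ (hadamardPhase (R.map (↑)) b l₁) * hadamardPhase (R.map (↑)) b l₂ =
      0 := by
  have h := congr_fun₂ hH.1 ⟨l₁, h₁⟩ ⟨l₂, h₂⟩
  rw [conjTranspose_hadamardMatrix_mul_apply, one_apply_ne (by simpa using hne)] at h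
  rcases mul_eq_zero.1 h with hB | hsum
  · simp only [inv_eq_zero, Nat.cast_eq_zero, Finset.card_eq_zero] at hB
    simp [hB]
  · exact hsum

lemma IsHadamardPair.sum_mul_conj (hH : IsHadamardPair R B L) {b₁ b₂ : Fin d → ℤ}
    (h₁ : b₁ ∈ B) (h₂ : b₂ ∈ B) :
    ∑ l ∈ L, hadamardPhase (R.map (↑)) b₁ l * starRingEnd ℂ (hadamardPhase (R.map (↑)) b₂ l) =
      if b₁ = b₂ then (B.card : ℂ) else 0 := by
  have h := congr_fun₂ hH.2 ⟨b₁, h₁⟩ ⟨b₂, h₂⟩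
  have hB : (B.card : ℂ) ≠ 0 := by simpa using Finset.card_ne_zero_of_mem h₁
  rw [hadamardMatrix_mul_conjTranspose_apply, inv_mul_eq_iff_eq_mul₀ hB, one_apply] at h
  simp [h, Subtype.ext_iff]

end Hadamard

section MeasOp

variable {d : ℕ} {Rr : Matrix (Fin d) (Fin d) ℝ} {B : Finset (Fin d → ℤ)} {μ : Measure (Fin d → ℝ)}

lemma continuous_tauMap (Rr : Matrix (Fin d) (Fin d) ℝ) (b : Fin d → ℤ) :
    Continuous (tauMap Rr b) := by
  unfold tauMap
  fun_prop

lemma measurableEmbedding_tauMap (hdet : IsUnit Rr.det) (b : Fin d → ℤ) :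
    MeasurableEmbedding (tauMap Rr b) :=
  MeasurableEquiv.measurableEmbedding
    { toFun := tauMap Rr b
      invFun := fun y => Rr *ᵥ y - castVec b
      left_inv := fun x => by simp [tauMap, mulVec_mulVec, mul_nonsing_inv _ hdet]
      right_inv := fun y => by simp [tauMap, mulVec_mulVec, nonsing_inv_mul _ hdet]
      measurable_toFun := (continuous_tauMap Rr b).measurable
      measurable_invFun :=
        ((continuous_const.matrix_mulVec continuous_id).sub continuous_const).measurable }

instance isFiniteMeasure_measOp [IsFiniteMeasure μ] : IsFiniteMeasure (measOp Rr B μ) := by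
  -- for `B = ∅` the factor `(#B)⁻¹` is `∞`, but it multiplies the zero measure
  rcases B.eq_empty_or_nonempty with rfl | hB
  · simp only [measOp, Finset.sum_empty, smul_zero]
    infer_instance
  · have hinv : ((B.card : ℝ≥0∞)⁻¹) = (((B.card : ℝ≥0)⁻¹ : ℝ≥0) : ℝ≥0∞) := by
      rw [ENNReal.coe_inv (by simpa using hB.ne_empty), ENNReal.coe_natCast]
    rw [measOp, hinv, ← ENNReal.smul_def]
    infer_instance

lemma map_tauMap_le_smul_measOp {b : Fin d → ℤ} (hb : b ∈ B) :
    Measure.map (tauMap Rr b) μ ≤ (B.card : ℝ≥0∞) • measOp Rr B μ := by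
  rw [measOp, smul_smul, ENNReal.mul_inv_cancel (by simpa using Finset.card_ne_zero_of_mem hb)
    (ENNReal.natCast_ne_top _), one_smul]
  exact Measure.le_iff.2 fun s _ => by
    simpa using Finset.single_le_sum (f := fun b => Measure.map (tauMap Rr b) μ s)
      (fun _ _ => zero_le) hb

lemma memLp_comp_tauMap {E : Type*} [NormedAddCommGroup E] {p : ℝ≥0∞} {f : (Fin d → ℝ) → E}
    (hdet : IsUnit Rr.det) (hf : MemLp f p (measOp Rr B μ)) {b : Fin d → ℤ} (hb : b ∈ B) :
    MemLp (fun x => f (tauMap Rr b x)) p μ :=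
  (measurableEmbedding_tauMap hdet b).memLp_map_measure_iff.1
    ((hf.smul_measure (ENNReal.natCast_ne_top _)).mono_measure (map_tauMap_le_smul_measOp hb))

lemma integral_measOp {E : Type*} [NormedAddCommGroup E] [NormedSpace ℝ E] {g : (Fin d → ℝ) → E}
    (hdet : IsUnit Rr.det) (hg : Integrable g (measOp Rr B μ)) :
    ∫ x, g x ∂(measOp Rr B μ) = (B.card : ℝ)⁻¹ • ∑ b ∈ B, ∫ x, g (tauMap Rr b x) ∂μ := by
  have hgb : ∀ b ∈ B, Integrable g (Measure.map (tauMap Rr b) μ) := fun b hb =>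
    (hg.smul_measure (ENNReal.natCast_ne_top _)).mono_measure (map_tauMap_le_smul_measOp hb)
  rw [measOp, integral_smul_measure, integral_finsetSum_measure hgb, ENNReal.toReal_inv,
    ENNReal.toReal_natCast]
  simp only [(measurableEmbedding_tauMap hdet _).integral_map]

lemma ae_measOp_of_forall_ae_comp_tauMap (hdet : IsUnit Rr.det) {p : (Fin d → ℝ) → Prop}
    (h : ∀ b ∈ B, ∀ᵐ x ∂μ, p (tauMap Rr b x)) : ∀ᵐ x ∂(measOp Rr B μ), p x := by
  have hb : ∀ b ∈ B, Measure.map (tauMap Rr b) μ {x | ¬p x} = 0 := fun b hb =>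
    ae_iff.1 ((measurableEmbedding_tauMap hdet b).ae_map_iff.2 (h b hb))
  rw [ae_iff, measOp, Measure.smul_apply, Measure.coe_finsetSum, Finset.sum_apply,
    Finset.sum_eq_zero hb, smul_zero]

end MeasOp

lemma isUnit_det_map_real_of_zero_notMem_spectrum {d : ℕ} {R : Matrix (Fin d) (Fin d) ℤ}
    (h : (0 : ℂ) ∉ spectrum ℂ (R.map ((↑) : ℤ → ℂ))) : IsUnit (R.map ((↑) : ℤ → ℝ)).det := by
  rw [spectrum.zero_notMem_iff, isUnit_iff_isUnit_det, ← Int.cast_det, isUnit_iff_ne_zero,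
    Int.cast_ne_zero] at h
  rwa [← Int.cast_det, isUnit_iff_ne_zero, Int.cast_ne_zero]

section Spectral

variable {d : ℕ}

def ExpOrthogonal (μ : Measure (Fin d → ℝ)) (Λ : Set (Fin d → ℝ)) : Prop :=
  ∀ γ₁ ∈ Λ, ∀ γ₂ ∈ Λ, γ₁ ≠ γ₂ → ∫ x, expFn γ₁ x * starRingEnd ℂ (expFn γ₂ x) ∂μ = 0

def ExpComplete (μ : Measure (Fin d → ℝ)) (Λ : Set (Fin d → ℝ)) : Prop :=
  ∀ f : (Fin d → ℝ) → ℂ, MemLp f 2 μ →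
    (∀ γ ∈ Λ, ∫ x, f x * starRingEnd ℂ (expFn γ x) ∂μ = 0) → f =ᵐ[μ] 0

lemma isSpectral_iff {μ : Measure (Fin d → ℝ)} {Λ : Set (Fin d → ℝ)} :
    IsSpectral μ Λ ↔ ExpOrthogonal μ Λ ∧ ExpComplete μ Λ :=
  Iff.rfl

lemma mem_specOp {R : Matrix (Fin d) (Fin d) ℤ} {L : Finset (Fin d → ℤ)} {Λ : Set (Fin d → ℝ)}
    {ξ : Fin d → ℝ} :
    ξ ∈ specOp R L Λ ↔ ∃ l ∈ L, ∃ γ ∈ Λ, (R.map ((↑) : ℤ → ℝ))ᵀ *ᵥ γ + castVec l = ξ := by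
  simp [specOp]

variable {Rr : Matrix (Fin d) (Fin d) ℝ} {B : Finset (Fin d → ℤ)} {μ : Measure (Fin d → ℝ)}

lemma memLp_top_conj_expFn (u : Fin d → ℝ) :
    MemLp (fun x => starRingEnd ℂ (expFn u x)) ∞ μ :=
  memLp_top_of_bound (Complex.continuous_conj.comp (continuous_expFn u)).aestronglyMeasurable 1
    (.of_forall fun x => by simp [norm_expFn])

lemma expFn_tauMap (hdet : IsUnit Rr.det) {γ : Fin d → ℝ} (hγ : γ ∈ PiSet B) {b : Fin d → ℤ}
    (hb : b ∈ B) (l : Fin d → ℤ) (x : Fin d → ℝ) :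
    expFn (Rrᵀ *ᵥ γ + castVec l) (tauMap Rr b x) =
      hadamardPhase Rr b l * expFn (γ + (Rr⁻¹)ᵀ *ᵥ castVec l) x := by
  obtain ⟨k, hk⟩ := hγ b hb
  have hRR : (Rr⁻¹)ᵀ *ᵥ (Rrᵀ *ᵥ γ) = γ := by
    rw [mulVec_mulVec, ← transpose_mul, mul_nonsing_inv _ hdet, transpose_one, one_mulVec]
  have hphase : expFn (γ + (Rr⁻¹)ᵀ *ᵥ castVec l) (castVec b) = hadamardPhase Rr b l := by
    rw [expFn_add_left, expFn_eq_one_of_dotProduct_eq_intCast hk, one_mul, expFn_comm,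
      expFn_mulVec, transpose_transpose]
  rw [tauMap, expFn_mulVec, mulVec_add, hRR, expFn_add_right, hphase, mul_comm]

noncomputable def pullbackSum (Rr : Matrix (Fin d) (Fin d) ℝ) (B : Finset (Fin d → ℤ))
    (l : Fin d → ℤ) (f : (Fin d → ℝ) → ℂ) (x : Fin d → ℝ) : ℂ :=
  starRingEnd ℂ (expFn ((Rr⁻¹)ᵀ *ᵥ castVec l) x) *
    ∑ b ∈ B, starRingEnd ℂ (hadamardPhase Rr b l) * f (tauMap Rr b x)

lemma sum_mul_conj_expFn_tauMap (hdet : IsUnit Rr.det) {γ : Fin d → ℝ} (hγ : γ ∈ PiSet B)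
    (l : Fin d → ℤ) (f : (Fin d → ℝ) → ℂ) (x : Fin d → ℝ) :
    ∑ b ∈ B, f (tauMap Rr b x) * starRingEnd ℂ (expFn (Rrᵀ *ᵥ γ + castVec l) (tauMap Rr b x)) =
      pullbackSum Rr B l f x * starRingEnd ℂ (expFn γ x) := by
  rw [pullbackSum, Finset.mul_sum, Finset.sum_mul]
  refine Finset.sum_congr rfl fun b hb => ?_
  rw [expFn_tauMap hdet hγ hb, expFn_add_left]
  simp only [map_mul]
  ring

theorem integral_mul_conj_expFn_measOp (hdet : IsUnit Rr.det) {f : (Fin d → ℝ) → ℂ}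
    (hf : Integrable f (measOp Rr B μ)) {γ : Fin d → ℝ} (hγ : γ ∈ PiSet B) (l : Fin d → ℤ) :
    ∫ x, f x * starRingEnd ℂ (expFn (Rrᵀ *ᵥ γ + castVec l) x) ∂(measOp Rr B μ) =
      (B.card : ℂ)⁻¹ * ∫ x, pullbackSum Rr B l f x * starRingEnd ℂ (expFn γ x) ∂μ := by
  have hint : Integrable (fun x => f x * starRingEnd ℂ (expFn (Rrᵀ *ᵥ γ + castVec l) x))
      (measOp Rr B μ) :=
    hf.mul_of_top_left (memLp_top_conj_expFn _)
  rw [integral_measOp hdet hint, Complex.real_smul, ← integral_finsetSum _ fun b hb =>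
    memLp_one_iff_integrable.1 (memLp_comp_tauMap hdet (memLp_one_iff_integrable.2 hint) hb)]
  simp only [sum_mul_conj_expFn_tauMap hdet hγ, Complex.ofReal_inv, Complex.ofReal_natCast]

lemma memLp_pullbackSum (hdet : IsUnit Rr.det) {f : (Fin d → ℝ) → ℂ}
    (hf : MemLp f 2 (measOp Rr B μ)) (l : Fin d → ℤ) : MemLp (pullbackSum Rr B l f) 2 μ := by
  have hsum : MemLp (fun x => ∑ b ∈ B, starRingEnd ℂ (hadamardPhase Rr b l) * f (tauMap Rr b x))
      2 μ :=
    memLp_finsetSum B fun b hb => (memLp_comp_tauMap hdet hf hb).const_mul _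
  exact hsum.mul' (memLp_top_conj_expFn _)

lemma pullbackSum_expFn (hdet : IsUnit Rr.det) {γ : Fin d → ℝ} (hγ : γ ∈ PiSet B)
    (l₁ l₂ : Fin d → ℤ) (x : Fin d → ℝ) :
    pullbackSum Rr B l₂ (expFn (Rrᵀ *ᵥ γ + castVec l₁)) x =
      (∑ b ∈ B, starRingEnd ℂ (hadamardPhase Rr b l₂) * hadamardPhase Rr b l₁) *
        (starRingEnd ℂ (expFn ((Rr⁻¹)ᵀ *ᵥ castVec l₂) x) *
          expFn (γ + (Rr⁻¹)ᵀ *ᵥ castVec l₁) x) := by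
  rw [pullbackSum, Finset.sum_mul, Finset.mul_sum]
  refine Finset.sum_congr rfl fun b hb => ?_
  rw [expFn_tauMap hdet hγ hb]
  ring

lemma pullbackSum_expFn_self (hdet : IsUnit Rr.det) {γ : Fin d → ℝ} (hγ : γ ∈ PiSet B)
    (l : Fin d → ℤ) (x : Fin d → ℝ) :
    pullbackSum Rr B l (expFn (Rrᵀ *ᵥ γ + castVec l)) x = B.card * expFn γ x := by
  rw [pullbackSum_expFn hdet hγ, expFn_add_left]
  simp only [conj_expFn_mul_self, Finset.sum_const, nsmul_eq_mul, mul_one]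
  linear_combination (B.card * expFn γ x) * conj_expFn_mul_self _ x

variable {R : Matrix (Fin d) (Fin d) ℤ} {L : Finset (Fin d → ℤ)}

lemma IsHadamardPair.sum_mul_pullbackSum (hH : IsHadamardPair R B L) {b₀ : Fin d → ℤ}
    (hb₀ : b₀ ∈ B) (f : (Fin d → ℝ) → ℂ) (x : Fin d → ℝ) :
    ∑ l ∈ L, hadamardPhase (R.map (↑)) b₀ l * expFn ((R.map (↑))⁻¹ᵀ *ᵥ castVec l) x *
        pullbackSum (R.map (↑)) B l f x =
      B.card * f (tauMap (R.map (↑)) b₀ x) := by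
  have hterm : ∀ l, hadamardPhase (R.map (↑)) b₀ l * expFn ((R.map (↑))⁻¹ᵀ *ᵥ castVec l) x *
      pullbackSum (R.map (↑)) B l f x = ∑ b ∈ B, hadamardPhase (R.map (↑)) b₀ l *
        starRingEnd ℂ (hadamardPhase (R.map (↑)) b l) * f (tauMap (R.map (↑)) b x) := by
    intro l
    rw [pullbackSum, mul_assoc, ← mul_assoc (expFn _ x), mul_comm (expFn _ x),
      conj_expFn_mul_self, one_mul, Finset.mul_sum]
    simp only [mul_assoc]
  rw [Finset.sum_congr rfl fun l _ => hterm l, Finset.sum_comm]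
  rw [Finset.sum_congr rfl fun b hb => by rw [← Finset.sum_mul, hH.sum_mul_conj hb₀ hb]]
  simp [hb₀]

theorem ExpOrthogonal.measOp_specOp [IsFiniteMeasure μ] (hdet : IsUnit (R.map ((↑) : ℤ → ℝ)).det)
    (hH : IsHadamardPair R B L) {Λ : Set (Fin d → ℝ)} (hΛ : Λ ⊆ PiSet B)
    (h : ExpOrthogonal μ Λ) : ExpOrthogonal (measOp (R.map (↑)) B μ) (specOp R L Λ) := by
  intro ξ₁ hξ₁ ξ₂ hξ₂ hne
  obtain ⟨l₁, hl₁, γ₁, hγ₁, rfl⟩ := mem_specOp.1 hξ₁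
  obtain ⟨l₂, hl₂, γ₂, hγ₂, rfl⟩ := mem_specOp.1 hξ₂
  have hint : Integrable (expFn ((R.map (↑))ᵀ *ᵥ γ₁ + castVec l₁)) (measOp (R.map (↑)) B μ) :=
    (memLp_top_of_bound (continuous_expFn _).aestronglyMeasurable 1
      (.of_forall fun x => (norm_expFn _ x).le)).integrable le_top
  rw [integral_mul_conj_expFn_measOp hdet hint (hΛ hγ₂)]
  rcases eq_or_ne l₁ l₂ with rfl | hl
  · have hγ : γ₁ ≠ γ₂ := by rintro rfl; exact hne rfl
    simp only [pullbackSum_expFn_self hdet (hΛ hγ₁), mul_assoc, integral_const_mul,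
      h γ₁ hγ₁ γ₂ hγ₂ hγ, mul_zero]
  · simp only [pullbackSum_expFn hdet (hΛ hγ₁), hH.sum_conj_mul_eq_zero hl₂ hl₁ hl.symm,
      zero_mul, integral_zero, mul_zero]

theorem ExpComplete.measOp_specOp [IsFiniteMeasure μ] (hdet : IsUnit (R.map ((↑) : ℤ → ℝ)).det)
    (hH : IsHadamardPair R B L) {Λ : Set (Fin d → ℝ)} (hΛ : Λ ⊆ PiSet B)
    (h : ExpComplete μ Λ) : ExpComplete (measOp (R.map (↑)) B μ) (specOp R L Λ) := by
  intro f hf horth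
  refine ae_measOp_of_forall_ae_comp_tauMap hdet fun b₀ hb₀ => ?_
  have hB : (B.card : ℂ) ≠ 0 := by simpa using Finset.card_ne_zero_of_mem hb₀
  have hpull : ∀ l ∈ L, pullbackSum (R.map (↑)) B l f =ᵐ[μ] 0 := fun l hl =>
    h _ (memLp_pullbackSum hdet hf l) fun γ hγ => by
      have := horth _ (mem_specOp.2 ⟨l, hl, γ, hγ, rfl⟩)
      rwa [integral_mul_conj_expFn_measOp hdet (hf.integrable one_le_two) (hΛ hγ),
        mul_eq_zero, or_iff_right (inv_ne_zero hB)] at this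
  filter_upwards [(Filter.eventually_all_finset L).2 hpull] with x hx
  have hsum := hH.sum_mul_pullbackSum hb₀ f x
  rw [Finset.sum_eq_zero fun l hl => by rw [hx l hl, Pi.zero_apply, mul_zero]] at hsum
  exact (mul_eq_zero.1 hsum.symm).resolve_left hB

end Spectral

theorem spectral_of_measOp_general {d : ℕ} (R : Matrix (Fin d) (Fin d) ℤ)
    (hRexp : ∀ z ∈ spectrum ℂ (R.map ((↑) : ℤ → ℂ)), 1 < ‖z‖)
    (B L : Finset (Fin d → ℤ))
    (hH : IsHadamardPair R B L)
    (μ : Measure (Fin d → ℝ)) [IsProbabilityMeasure μ]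
    (Λ : Set (Fin d → ℝ)) (hΛ : Λ ⊆ PiSet B) (hspec : IsSpectral μ Λ) :
    IsSpectral (measOp (R.map ((↑) : ℤ → ℝ)) B μ) (specOp R L Λ) := by
  have hdet := isUnit_det_map_real_of_zero_notMem_spectrum fun h => by
    have := hRexp 0 h
    norm_num at this
  obtain ⟨horth, hcomplete⟩ := isSpectral_iff.1 hspec
  exact ⟨horth.measOp_specOp hdet hH hΛ, hcomplete.measOp_specOp hdet hH hΛ⟩

theorem spectral_of_measOp {d N : ℕ} (R : Matrix (Fin d) (Fin d) ℤ)
    (hRexp : ∀ z ∈ spectrum ℂ (R.map ((↑) : ℤ → ℂ)), 1 < ‖z‖)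
    (B L : Finset (Fin d → ℤ)) (hBcard : B.card = N) (hLcard : L.card = N) (hN : 2 ≤ N)
    (hH : IsHadamardPair R B L)
    (μ : Measure (Fin d → ℝ)) [IsProbabilityMeasure μ]
    (Λ : Set (Fin d → ℝ)) (hΛ : Λ ⊆ PiSet B) (hspec : IsSpectral μ Λ) :
    IsSpectral (measOp (R.map ((↑) : ℤ → ℝ)) B μ) (specOp R L Λ) :=
  spectral_of_measOp_general R hRexp B L hH μ Λ hΛ hspec
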